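/- Let Γ = (γ_{ij})_{i,j=1}^N be a gain matrix with each γ_{ij} ∈ K∞ ∪ {0} containing no zero row, let μ_1, …, μ_N be monotone aggregation functions, and let Γμ(s)_i = μ_i(γ_{i1}(s_1), …, γ_{iN}(s_N)) be the induced gain operator; assume Γμ satisfies the small gain condition. Let κ_0 > 0, κ_Γ > κ_h > 0, let φ(v) = Γμ(v)·(1 + min{0, (κ_Γ − 2‖v‖)/(‖v‖ + κ_0)}) + max{0, κ_h − 2‖v‖}·e, and let c ∈ ℝ^N with c ≫ 0 and ‖c‖ < κ_Γ/2. Set Γμ^max := Γμ((κ_Γ + κ_0)·e), choose k ∈ ℕ, k ≥ 1, with (1/(2k − 1))·Γμ^max ≪ c, and let δ > 0 satisfy δ < min{(κ_Γ − κ_h)/(2√N), (κ_Γ + 2κ_0)/(2k√N)}. Let y^1, …, y^{N+1} ∈ ℝ^N_+ × {0, 1}, y^j = (v^j, t_j), be the vertices of an N-simplex of the triangulation K̃_1(δ), i.e., y^{j+1} = y^j + d^j with pairwise distinct increments d^j ∈ {δe_1, …, δe_N, e_{N+1}}, such that κ_Γ/2 ≤ ‖v^j‖ < κ_Γ + κ_0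 for all j and ‖v^1 + δ·e‖ ≥ κ_Γ + κ_0. Define labels l(y^j) = (1 − t_j)c + t_j φ(v^j) − v^j and the (N+1)×(N+1) labeling matrix L whose j-th column is (1, l(y^j)^T)^T. Then the simplex is not complete: there is no matrix W with L·W = I_{N+1} such that every row of W is lexicographically positive. -/

import Mathlib

/-- A function `α : ℝ_+ → ℝ_+` is of class `K∞`: continuous, strictly
increasing, unbounded and `α(0) = 0` (stated on `[0,∞)`). -/
def ClassKInf (α : ℝ → ℝ) : Prop :=
  ContinuousOn α (Set.Ici 0) ∧ StrictMonoOn α (Set.Ici 0) ∧ α 0 = 0 ∧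
    (∀ x, 0 ≤ x → 0 ≤ α x) ∧ (∀ M : ℝ, ∃ x, 0 ≤ x ∧ M < α x)

/-- A monotone aggregation function `μ : ℝ^N_+ → ℝ_+`: continuous, positive
(`μ(s) = 0` iff `s = 0`), strictly increasing with respect to `≪`, and
unbounded as `‖s‖ → ∞`. -/
def IsMAF {n : ℕ} (μ : EuclideanSpace ℝ (Fin n) → ℝ) : Prop :=
  ContinuousOn μ {s : EuclideanSpace ℝ (Fin n) | ∀ i, 0 ≤ s i} ∧
    (∀ s : EuclideanSpace ℝ (Fin n), (∀ i, 0 ≤ s i) → 0 ≤ μ s) ∧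
    (∀ s : EuclideanSpace ℝ (Fin n), (∀ i, 0 ≤ s i) → (μ s = 0 ↔ s = 0)) ∧
    (∀ s t : EuclideanSpace ℝ (Fin n), (∀ i, 0 ≤ s i) → (∀ i, 0 ≤ t i) →
      (∀ i, s i < t i) → μ s < μ t) ∧
    (∀ M : ℝ, ∃ C : ℝ, ∀ s : EuclideanSpace ℝ (Fin n), (∀ i, 0 ≤ s i) →
      C ≤ ‖s‖ → M ≤ μ s)

/-- A row vector is lexicographically positive if its first nonzero entry is
positive. -/
def LexPosRow {n : ℕ} (w : Fin n → ℝ) : Prop :=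
  ∃ j, 0 < w j ∧ ∀ i, i < j → w i = 0

/-!
On a simplex of `K̃₁(δ)` every coordinate is raised at most once, so `v¹ ≤ vʲ ≤ v¹ + δe` and
`‖vʲ‖ ≥ κ_Γ + κ₀ - δ√N`. For such `v` the factor `1 + (κ_Γ - 2‖v‖)/(‖v‖ + κ₀)` in `φ` is at most
`1/(2k - 1)` by the choice of `δ`, hence `φ(vʲ) ≤ Γμ^max/(2k - 1) ≪ c`. Since `‖v¹‖ ≥ κ_Γ/2 > ‖c‖`,
some coordinate has `cᵢ < v¹ᵢ ≤ vʲᵢ`, so row `i + 1` of `L` is negative. Then `L W = I` writes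
`-eᵢ₊₁ᵀ` as a positive combination of the rows of `W`, which cannot be lexicographically positive.
-/

lemma EuclideanSpace.apply_le_norm {n : Type*} [Fintype n] (x : EuclideanSpace ℝ n) (i : n) :
    x i ≤ ‖x‖ :=
  (le_abs_self _).trans (by simpa only [Real.norm_eq_abs] using PiLp.norm_apply_le x i)

lemma EuclideanSpace.norm_le_norm_of_nonneg_of_le {n : Type*} [Fintype n]
    {x y : EuclideanSpace ℝ n} (hx : ∀ i, 0 ≤ x i) (hxy : ∀ i, x i ≤ y i) : ‖x‖ ≤ ‖y‖ := by
  have hsq : ‖x‖ ^ 2 ≤ ‖y‖ ^ 2 := by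
    simp only [EuclideanSpace.real_norm_sq_eq]
    gcongr with i
    exacts [hx i, hxy i]
  exact (pow_le_pow_iff_left₀ (norm_nonneg _) (norm_nonneg _) two_ne_zero).1 hsq

lemma EuclideanSpace.norm_le_mul_sqrt_card {n : Type*} [Fintype n] {x : EuclideanSpace ℝ n}
    {r : ℝ} (hr : 0 ≤ r) (hx : ∀ i, |x i| ≤ r) : ‖x‖ ≤ r * √(Fintype.card n) := by
  have hsq : ‖x‖ ^ 2 ≤ (r * √(Fintype.card n)) ^ 2 := by
    rw [EuclideanSpace.real_norm_sq_eq, mul_pow, Real.sq_sqrt (Nat.cast_nonneg _), mul_comm,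
      ← nsmul_eq_mul, ← Finset.card_univ, ← Finset.sum_const]
    exact Finset.sum_le_sum fun i _ => sq_le_sq.2 ((hx i).trans (le_abs_self r))
  exact (pow_le_pow_iff_left₀ (norm_nonneg _) (by positivity) two_ne_zero).1 hsq

lemma EuclideanSpace.exists_lt_apply_of_norm_lt {n : Type*} [Fintype n]
    {x y : EuclideanSpace ℝ n} (hy : ∀ i, 0 ≤ y i) (hxy : ‖x‖ < ‖y‖) : ∃ i, x i < y i := by
  by_contra! h
  exact hxy.not_ge (norm_le_norm_of_nonneg_of_le hy h)

namespace LexPosRow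

lemma not_of_nonpos {n : ℕ} {w : Fin n → ℝ} (hw : ∀ i, w i ≤ 0) : ¬ LexPosRow w :=
  fun ⟨j, hj, _⟩ => (hw j).not_gt hj

lemma sum_smul {n : ℕ} {ι : Type*} [Fintype ι] [Nonempty ι] {a : ι → ℝ} {w : ι → Fin n → ℝ}
    (ha : ∀ j, 0 < a j) (hw : ∀ j, LexPosRow (w j)) : LexPosRow (∑ j, a j • w j) := by
  choose p hp hp0 using hw
  obtain ⟨j₀, -, hj₀⟩ := Finset.exists_min_image Finset.univ p Finset.univ_nonempty
  refine ⟨p j₀, ?_, fun i hi => ?_⟩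
  · simp only [Finset.sum_apply, Pi.smul_apply, smul_eq_mul]
    refine Finset.sum_pos' (fun j _ => mul_nonneg (ha j).le ?_)
      ⟨j₀, Finset.mem_univ _, mul_pos (ha j₀) (hp j₀)⟩
    rcases (hj₀ j (Finset.mem_univ _)).lt_or_eq with h | h
    · exact (hp0 j _ h).ge
    · exact h ▸ (hp j).le
  · simp only [Finset.sum_apply, Pi.smul_apply, smul_eq_mul]
    exact Finset.sum_eq_zero fun j _ => by
      rw [hp0 j i (hi.trans_le (hj₀ j (Finset.mem_univ _))), mul_zero]

end LexPosRow

lemma Matrix.not_forall_neg_of_mul_eq_one {n : ℕ} {ι : Type*} [Fintype ι] [Nonempty ι]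
    {L : Matrix (Fin n) ι ℝ} {W : Matrix ι (Fin n) ℝ} (hLW : L * W = 1)
    (hW : ∀ j, LexPosRow (W j)) (r : Fin n) : ¬ ∀ j, L r j < 0 := by
  intro hneg
  refine LexPosRow.not_of_nonpos (fun i => ?_)
    (LexPosRow.sum_smul (fun j => neg_pos.2 (hneg j)) hW)
  have hri := congrFun (congrFun hLW r) i
  simp only [Matrix.mul_apply] at hri
  simp only [Finset.sum_apply, Pi.smul_apply, smul_eq_mul, neg_mul, Finset.sum_neg_distrib, hri,
    neg_nonpos]
  exact Matrix.zero_le_one_elem (α := ℝ) r i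

section Triangulation

def IsK1Step {N : ℕ} (δ : ℝ) (x : EuclideanSpace ℝ (Fin N) × ℝ) : Prop :=
  (∃ i, x = (δ • EuclideanSpace.single i (1 : ℝ), (0 : ℝ))) ∨ x = (0, 1)

variable {N n : ℕ} {δ : ℝ} {v : Fin (n + 1) → EuclideanSpace ℝ (Fin N)}
  {d : Fin n → EuclideanSpace ℝ (Fin N) × ℝ}

lemma simplexK1_vertex_apply_eq_or (hdinj : Function.Injective d)
    (hdmem : ∀ j, IsK1Step δ (d j))
    (hstep : ∀ j, v j.succ = v j.castSucc + (d j).1) (J : Fin (n + 1)) (i : Fin N) :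
    v J i = v 0 i ∨ v J i = v 0 i + δ ∧
      ∃ m : Fin n, m.castSucc < J ∧ d m = (δ • EuclideanSpace.single i (1 : ℝ), (0 : ℝ)) := by
  induction J using Fin.induction with
  | zero => exact Or.inl rfl
  | succ j ih =>
    have hj : v j.succ i = v j.castSucc i + (d j).1 i := by rw [hstep j]; rfl
    have hjm : ∀ m : Fin n, m.castSucc < j.castSucc → m.castSucc < j.succ :=
      fun m hm => hm.trans Fin.castSucc_lt_succ
    by_cases hdj : d j = (δ • EuclideanSpace.single i (1 : ℝ), (0 : ℝ))
    · rcases ih with h | ⟨-, m, hm, hdm⟩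
      · exact Or.inr ⟨by simp [hj, h, hdj], j, Fin.castSucc_lt_succ, hdj⟩
      · exact absurd (hdinj (hdm.trans hdj.symm) ▸ hm) (lt_irrefl _)
    · have hdji : (d j).1 i = 0 := by
        rcases hdmem j with ⟨i', hi'⟩ | h01
        · have hii' : i ≠ i' := by rintro rfl; exact hdj hi'
          simp [hi', hii']
        · simp [h01]
      rcases ih with h | ⟨h, m, hm, hdm⟩
      · exact Or.inl (by rw [hj, h, hdji, add_zero])
      · exact Or.inr ⟨by rw [hj, h, hdji, add_zero], m, hjm m hm, hdm⟩

lemma simplexK1_vertex_apply_mem_Icc (hδ : 0 ≤ δ) (hdinj : Function.Injective d)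
    (hdmem : ∀ j, IsK1Step δ (d j))
    (hstep : ∀ j, v j.succ = v j.castSucc + (d j).1) (J : Fin (n + 1)) (i : Fin N) :
    v J i ∈ Set.Icc (v 0 i) (v 0 i + δ) := by
  rcases simplexK1_vertex_apply_eq_or hdinj hdmem hstep J i with h | ⟨h, -⟩ <;>
    rw [h] <;> constructor <;> linarith

lemma simplexK1_norm_add_smul_le (hδ : 0 ≤ δ) (hdinj : Function.Injective d)
    (hdmem : ∀ j, IsK1Step δ (d j))
    (hstep : ∀ j, v j.succ = v j.castSucc + (d j).1) {e : EuclideanSpace ℝ (Fin N)}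
    (he : ∀ i, e i = 1) (J : Fin (n + 1)) : ‖v 0 + δ • e‖ ≤ ‖v J‖ + δ * √N := by
  have hgap : ‖v 0 + δ • e - v J‖ ≤ δ * √N := by
    refine (EuclideanSpace.norm_le_mul_sqrt_card (x := v 0 + δ • e - v J) hδ fun i => ?_).trans_eq
      (by rw [Fintype.card_fin])
    have hJ := simplexK1_vertex_apply_mem_Icc hδ hdinj hdmem hstep J i
    simp only [PiLp.sub_apply, PiLp.add_apply, PiLp.smul_apply, he, smul_eq_mul, mul_one]
    exact abs_le.2 ⟨by linarith [hJ.2], by linarith [hJ.1]⟩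
  calc ‖v 0 + δ • e‖ = ‖v J + (v 0 + δ • e - v J)‖ := by rw [add_sub_cancel]
    _ ≤ ‖v J‖ + δ * √N := (norm_add_le _ _).trans (by linarith)

end Triangulation

lemma gain_nonneg {g : ℝ → ℝ} (hg : ClassKInf g ∨ ∀ x, g x = 0) {x : ℝ} (hx : 0 ≤ x) :
    0 ≤ g x := by
  rcases hg with hg | hg
  · exact hg.2.2.2.1 x hx
  · exact (hg x).ge

lemma gain_monotoneOn {g : ℝ → ℝ} (hg : ClassKInf g ∨ ∀ x, g x = 0) :
    MonotoneOn g (Set.Ici 0) := by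
  rcases hg with hg | hg
  · exact hg.2.1.monotoneOn
  · intro x _ y _ _
    rw [hg x, hg y]

lemma IsMAF.mono {n : ℕ} {μ : EuclideanSpace ℝ (Fin n) → ℝ} (h : IsMAF μ)
    {s t : EuclideanSpace ℝ (Fin n)} (hs : ∀ i, 0 ≤ s i) (ht : ∀ i, 0 ≤ t i)
    (hst : ∀ i, s i ≤ t i) : μ s ≤ μ t := by
  set shift : ℝ → EuclideanSpace ℝ (Fin n) := fun ε => t + ε • WithLp.toLp 2 (fun _ => 1)
  have hshift : ∀ ε i, shift ε i = t i + ε := fun ε i => by simp [shift]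
  have hcont : ContinuousWithinAt (μ ∘ shift) (Set.Ioi 0) 0 := by
    refine ((h.1.comp (by fun_prop : Continuous shift).continuousOn fun ε hε i => ?_) 0
      Set.self_mem_Ici).mono Set.Ioi_subset_Ici_self
    rw [hshift]
    exact add_nonneg (ht i) hε
  have hlim : Filter.Tendsto (μ ∘ shift) (nhdsWithin 0 (Set.Ioi 0)) (nhds (μ t)) := by
    simpa [ContinuousWithinAt, shift] using hcont
  refine ge_of_tendsto hlim (eventually_nhdsWithin_of_forall fun ε (hε : 0 < ε) => ?_)
  refine (h.2.2.2.1 s (shift ε) hs (fun i => ?_) fun i => ?_).le <;> rw [hshift] <;>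
    linarith [ht i, hst i]

section GainOperator

variable {N : ℕ} {γ : Fin N → Fin N → ℝ → ℝ} {μ : Fin N → EuclideanSpace ℝ (Fin N) → ℝ}
  {Γμ : EuclideanSpace ℝ (Fin N) → EuclideanSpace ℝ (Fin N)}

lemma gainOperator_nonneg (hγ : ∀ i j, ClassKInf (γ i j) ∨ ∀ x, γ i j x = 0)
    (hμ : ∀ i, IsMAF (μ i)) (hΓμ : ∀ s i, Γμ s i = μ i (WithLp.toLp 2 fun j => γ i j (s j)))
    {s : EuclideanSpace ℝ (Fin N)} (hs : ∀ i, 0 ≤ s i) (i : Fin N) : 0 ≤ Γμ s i := by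
  rw [hΓμ]
  exact (hμ i).2.1 _ fun j => gain_nonneg (hγ i j) (hs j)

lemma gainOperator_mono (hγ : ∀ i j, ClassKInf (γ i j) ∨ ∀ x, γ i j x = 0)
    (hμ : ∀ i, IsMAF (μ i)) (hΓμ : ∀ s i, Γμ s i = μ i (WithLp.toLp 2 fun j => γ i j (s j)))
    {s t : EuclideanSpace ℝ (Fin N)} (hs : ∀ i, 0 ≤ s i) (hst : ∀ i, s i ≤ t i) (i : Fin N) :
    Γμ s i ≤ Γμ t i := by
  have ht : ∀ j, 0 ≤ t j := fun j => (hs j).trans (hst j)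
  rw [hΓμ, hΓμ]
  exact (hμ i).mono (fun j => gain_nonneg (hγ i j) (hs j))
    (fun j => gain_nonneg (hγ i j) (ht j)) fun j => gain_monotoneOn (hγ i j) (hs j) (ht j) (hst j)

end GainOperator

lemma phi_apply_le_div {N : ℕ} {φ Γμ : EuclideanSpace ℝ (Fin N) → EuclideanSpace ℝ (Fin N)}
    {κ₀ κΓ κh : ℝ} (hφ : ∀ v i, φ v i = Γμ v i * (1 + min 0 ((κΓ - 2 * ‖v‖) / (‖v‖ + κ₀)))
      + max 0 (κh - 2 * ‖v‖)) (hκ₀ : 0 < κ₀) (hκΓ : κh < κΓ) {v : EuclideanSpace ℝ (Fin N)}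
    (hv : κΓ / 2 ≤ ‖v‖) {p s : ℝ} (hp : 0 < p) (hvs : κΓ + κ₀ - s ≤ ‖v‖)
    (hs : (p + 1) * s ≤ κΓ + 2 * κ₀) {i : Fin N} (hΓ : 0 ≤ Γμ v i) : φ v i ≤ Γμ v i / p := by
  have hden : 0 < ‖v‖ + κ₀ := by positivity
  have hmin : min 0 ((κΓ - 2 * ‖v‖) / (‖v‖ + κ₀)) = (κΓ - 2 * ‖v‖) / (‖v‖ + κ₀) :=
    min_eq_right (div_nonpos_of_nonpos_of_nonneg (by linarith) hden.le)
  have hmax : max 0 (κh - 2 * ‖v‖) = 0 := max_eq_left (by linarith)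
  have hscale : 1 + (κΓ - 2 * ‖v‖) / (‖v‖ + κ₀) ≤ 1 / p := by
    rw [one_add_div hden.ne', div_le_div_iff₀ hden hp]
    nlinarith [mul_le_mul_of_nonneg_right hvs hp.le]
  rw [hφ, hmin, hmax, add_zero]
  exact (mul_le_mul_of_nonneg_left hscale hΓ).trans_eq (mul_one_div _ _)

lemma label_apply_neg {ι : Type*} [Fintype ι] {c φ v : EuclideanSpace ℝ ι} {t : ℝ}
    (ht : t ∈ Set.Icc 0 1) {i : ι} (hc : c i < v i) (hφ : φ i < v i) :
    ((1 - t) • c + t • φ - v) i < 0 := by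
  set m := max (c i - v i) (φ i - v i)
  have hm : m < 0 := max_lt (by linarith) (by linarith)
  have h₁ := mul_le_mul_of_nonneg_left (le_max_left (c i - v i) (φ i - v i)) (sub_nonneg.2 ht.2)
  have h₂ := mul_le_mul_of_nonneg_left (le_max_right (c i - v i) (φ i - v i)) ht.1
  simp only [PiLp.sub_apply, PiLp.add_apply, PiLp.smul_apply, smul_eq_mul]
  nlinarith

theorem no_complete_simplex_near_region_four_general
    {N : ℕ}
    (γ : Fin N → Fin N → ℝ → ℝ)
    (hγ : ∀ i j, ClassKInf (γ i j) ∨ ∀ x, γ i j x = 0)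
    (μ : Fin N → EuclideanSpace ℝ (Fin N) → ℝ) (hμ : ∀ i, IsMAF (μ i))
    (Γμ : EuclideanSpace ℝ (Fin N) → EuclideanSpace ℝ (Fin N))
    (hΓμ : ∀ (s : EuclideanSpace ℝ (Fin N)) (i : Fin N),
      Γμ s i = μ i (WithLp.toLp 2 (fun j => γ i j (s j))))
    (κ₀ κΓ κh : ℝ) (hκ₀ : 0 < κ₀) (hκΓ : κh < κΓ)
    (φ : EuclideanSpace ℝ (Fin N) → EuclideanSpace ℝ (Fin N))
    (hφ : ∀ (v : EuclideanSpace ℝ (Fin N)) (i : Fin N),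
      φ v i = Γμ v i * (1 + min 0 ((κΓ - 2 * ‖v‖) / (‖v‖ + κ₀)))
        + max 0 (κh - 2 * ‖v‖))
    (c : EuclideanSpace ℝ (Fin N)) (hcnorm : ‖c‖ < κΓ / 2)
    -- `Γμ^max`, the choice of `k` and the bound on `δ`
    (e : EuclideanSpace ℝ (Fin N)) (he : ∀ i, e i = 1)
    (Γmax : EuclideanSpace ℝ (Fin N))
    (hΓmax : Γmax = Γμ ((κΓ + κ₀) • e))
    (k : ℕ) (hk : 1 ≤ k)
    (hkc : ∀ i, (1 / (2 * (k : ℝ) - 1)) * Γmax i < c i)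
    (δ : ℝ) (hδ : 0 < δ)
    (hδlt : δ < min ((κΓ - κh) / (2 * Real.sqrt N))
      ((κΓ + 2 * κ₀) / (2 * (k : ℝ) * Real.sqrt N)))
    -- the vertices `y^j = (v^j, t_j)` of an `N`-simplex of `K̃₁(δ)`
    (v : Fin (N + 1) → EuclideanSpace ℝ (Fin N)) (t : Fin (N + 1) → ℝ)
    (hvnonneg : ∀ j i, 0 ≤ v j i) (ht01 : ∀ j, t j = 0 ∨ t j = 1)
    (d : Fin N → EuclideanSpace ℝ (Fin N) × ℝ)
    (hdinj : Function.Injective d)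
    (hdmem : ∀ j : Fin N,
      (∃ i : Fin N, d j = (δ • EuclideanSpace.single i (1 : ℝ), (0 : ℝ))) ∨
        d j = (0, 1))
    (hstep : ∀ j : Fin N,
      v j.succ = v j.castSucc + (d j).1 ∧ t j.succ = t j.castSucc + (d j).2)
    -- the simplex lies in region Ⅲ' touching region Ⅳ'
    (hlow : ∀ j, κΓ / 2 ≤ ‖v j‖) (hhigh : ∀ j, ‖v j‖ < κΓ + κ₀)
    (htouch : κΓ + κ₀ ≤ ‖v 0 + δ • e‖)
    -- the labels and the labeling matrix
    (lab : Fin (N + 1) → EuclideanSpace ℝ (Fin N))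
    (hlab : ∀ j, lab j = (1 - t j) • c + t j • φ (v j) - v j)
    (L : Matrix (Fin (N + 1)) (Fin (N + 1)) ℝ)
    (hLrow : ∀ (i : Fin N) (j : Fin (N + 1)), L i.succ j = lab j i) :
    ¬ ∃ W : Matrix (Fin (N + 1)) (Fin (N + 1)) ℝ,
        L * W = 1 ∧ ∀ i, LexPosRow (W i) := by
  rintro ⟨W, hLW, hW⟩
  obtain ⟨i, hci⟩ :=
    EuclideanSpace.exists_lt_apply_of_norm_lt (hvnonneg 0) (hcnorm.trans_le (hlow 0))
  have hbox := simplexK1_vertex_apply_mem_Icc hδ.le hdinj hdmem (fun j => (hstep j).1)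
  have hk' : (0 : ℝ) < 2 * k - 1 := by linarith [(Nat.one_le_cast (α := ℝ)).2 hk]
  have hδk : (2 * k - 1 + 1) * (δ * √N) ≤ κΓ + 2 * κ₀ := by
    have := (lt_div_iff₀ (by have := i.pos; positivity)).1 (lt_min_iff.1 hδlt).2
    linarith
  have hφc : ∀ J, φ (v J) i < c i := fun J => by
    have hnear := simplexK1_norm_add_smul_le hδ.le hdinj hdmem (fun j => (hstep j).1) he J
    have hΓ : Γμ (v J) i ≤ Γmax i := by
      rw [hΓmax]
      refine gainOperator_mono hγ hμ hΓμ (hvnonneg J) (fun j => ?_) i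
      simpa [he] using ((v J).apply_le_norm j).trans (hhigh J).le
    calc φ (v J) i ≤ Γμ (v J) i / (2 * k - 1) := phi_apply_le_div hφ hκ₀ hκΓ (hlow J) hk'
          (by linarith) hδk (gainOperator_nonneg hγ hμ hΓμ (hvnonneg J) i)
      _ ≤ 1 / (2 * k - 1) * Γmax i := by rw [one_div_mul_eq_div]; gcongr
      _ < c i := hkc i
  refine Matrix.not_forall_neg_of_mul_eq_one hLW hW i.succ fun J => ?_
  rw [hLrow, hlab]
  exact label_apply_neg (by rcases ht01 J with h | h <;> simp [h])
    (hci.trans_le (hbox J i).1) ((hφc J).trans (hci.trans_le (hbox J i).1))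

/-- Theorem (the path cannot enter region Ⅳ'): let `Γ` be a gain matrix with
entries in `K∞ ∪ {0}` and no zero row, `μ_i` monotone aggregation functions,
`Γμ` the induced gain operator satisfying the small gain condition, `φ` as in
the paper, and `c ≫ 0` with `‖c‖ < κ_Γ/2`.  With `Γμ^max = Γμ((κ_Γ+κ_0)e)`,
`k ≥ 1` such that `(1/(2k−1))Γμ^max ≪ c` and
`δ < min{(κ_Γ−κ_h)/(2√N), (κ_Γ+2κ_0)/(2k√N)}`, any `N`-simplex of `K̃₁(δ)`
with vertices `y^j = (v^j, t_j)` satisfying `κ_Γ/2 ≤ ‖v^j‖ < κ_Γ + κ_0` for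
all `j` and `‖v^1 + δe‖ ≥ κ_Γ + κ_0` is not complete. -/
theorem no_complete_simplex_near_region_four
    {N : ℕ} (hN : 0 < N)
    (γ : Fin N → Fin N → ℝ → ℝ)
    (hγ : ∀ i j, ClassKInf (γ i j) ∨ ∀ x, γ i j x = 0)
    (hnozero : ∀ i : Fin N, ∃ j : Fin N, ClassKInf (γ i j))
    (μ : Fin N → EuclideanSpace ℝ (Fin N) → ℝ) (hμ : ∀ i, IsMAF (μ i))
    (Γμ : EuclideanSpace ℝ (Fin N) → EuclideanSpace ℝ (Fin N))
    (hΓμ : ∀ (s : EuclideanSpace ℝ (Fin N)) (i : Fin N),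
      Γμ s i = μ i (WithLp.toLp 2 (fun j => γ i j (s j))))
    -- small gain condition
    (hsg : ∀ s : EuclideanSpace ℝ (Fin N), (∀ i, 0 ≤ s i) → s ≠ 0 →
      ¬ (∀ i, s i ≤ Γμ s i))
    (κ₀ κΓ κh : ℝ) (hκ₀ : 0 < κ₀) (hκh : 0 < κh) (hκΓ : κh < κΓ)
    (φ : EuclideanSpace ℝ (Fin N) → EuclideanSpace ℝ (Fin N))
    (hφ : ∀ (v : EuclideanSpace ℝ (Fin N)) (i : Fin N),
      φ v i = Γμ v i * (1 + min 0 ((κΓ - 2 * ‖v‖) / (‖v‖ + κ₀)))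
        + max 0 (κh - 2 * ‖v‖))
    (c : EuclideanSpace ℝ (Fin N)) (hc : ∀ i, 0 < c i) (hcnorm : ‖c‖ < κΓ / 2)
    -- `Γμ^max`, the choice of `k` and the bound on `δ`
    (e : EuclideanSpace ℝ (Fin N)) (he : ∀ i, e i = 1)
    (Γmax : EuclideanSpace ℝ (Fin N))
    (hΓmax : Γmax = Γμ ((κΓ + κ₀) • e))
    (k : ℕ) (hk : 1 ≤ k)
    (hkc : ∀ i, (1 / (2 * (k : ℝ) - 1)) * Γmax i < c i)
    (δ : ℝ) (hδ : 0 < δ)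
    (hδlt : δ < min ((κΓ - κh) / (2 * Real.sqrt N))
      ((κΓ + 2 * κ₀) / (2 * (k : ℝ) * Real.sqrt N)))
    -- the vertices `y^j = (v^j, t_j)` of an `N`-simplex of `K̃₁(δ)`
    (v : Fin (N + 1) → EuclideanSpace ℝ (Fin N)) (t : Fin (N + 1) → ℝ)
    (hvnonneg : ∀ j i, 0 ≤ v j i) (ht01 : ∀ j, t j = 0 ∨ t j = 1)
    (d : Fin N → EuclideanSpace ℝ (Fin N) × ℝ)
    (hdinj : Function.Injective d)
    (hdmem : ∀ j : Fin N,
      (∃ i : Fin N, d j = (δ • EuclideanSpace.single i (1 : ℝ), (0 : ℝ))) ∨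
        d j = (0, 1))
    (hstep : ∀ j : Fin N,
      v j.succ = v j.castSucc + (d j).1 ∧ t j.succ = t j.castSucc + (d j).2)
    -- the simplex lies in region Ⅲ' touching region Ⅳ'
    (hlow : ∀ j, κΓ / 2 ≤ ‖v j‖) (hhigh : ∀ j, ‖v j‖ < κΓ + κ₀)
    (htouch : κΓ + κ₀ ≤ ‖v 0 + δ • e‖)
    -- the labels and the labeling matrix
    (lab : Fin (N + 1) → EuclideanSpace ℝ (Fin N))
    (hlab : ∀ j, lab j = (1 - t j) • c + t j • φ (v j) - v j)
    (L : Matrix (Fin (N + 1)) (Fin (N + 1)) ℝ)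
    (hLtop : ∀ j, L 0 j = 1)
    (hLrow : ∀ (i : Fin N) (j : Fin (N + 1)), L i.succ j = lab j i) :
    ¬ ∃ W : Matrix (Fin (N + 1)) (Fin (N + 1)) ℝ,
        L * W = 1 ∧ ∀ i, LexPosRow (W i) :=
  no_complete_simplex_near_region_four_general γ hγ μ hμ Γμ hΓμ κ₀ κΓ κh hκ₀ hκΓ φ hφ c hcnorm e he
    Γmax hΓmax k hk hkc δ hδ hδlt v t hvnonneg ht01 d hdinj hdmem hstep hlow hhigh htouch lab hlab L
    hLrow
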